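/- arXiv:1402.4707 — 2 statements merged into one kernel-verified Lean document; each statement's English description precedes it below -/
import Mathlib

section
/- Let σ be a stable witness prestructure and S ⊆ A(σ). Then C(st_S(σ)) = C(st_S(C(σ))), i.e., the canonical form of the stabilization of σ equals the canonical form of the stabilization of the canonical form of σ. -/
open Finset

/-- A combinatorial table `((W 0, G 0), …, (W t, G t))` of pairs of finite sets,
normalized so that columns beyond `t` are empty. -/
structure WComb where
  t : ℕ
  W : ℕ → Finset ℕ
  G : ℕ → Finset ℕ
  W_beyond : ∀ i, t < i → W i = ∅
  G_beyond : ∀ i, t < i → G i = ∅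

namespace WComb

/-- Conditions (P1)-(P3) of a witness prestructure. -/
def IsPre (σ : WComb) : Prop :=
  (∀ i, 1 ≤ i → i ≤ σ.t → σ.W i ⊆ σ.W 0 ∧ σ.G i ⊆ σ.W 0) ∧
  (∀ i j, i < j → j ≤ σ.t → Disjoint (σ.G i) (σ.G j)) ∧
  (∀ i j, i ≤ j → j ≤ σ.t → Disjoint (σ.G i) (σ.W j))

/-- A stable witness prestructure: condition (S). -/
def IsStable (σ : WComb) : Prop := σ.IsPre ∧ (1 ≤ σ.t → σ.W σ.t ≠ ∅)

/-- A witness structure: condition (W). -/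
def IsWitness (σ : WComb) : Prop := σ.IsPre ∧ ∀ i, 1 ≤ i → i ≤ σ.t → σ.W i ≠ ∅

/-- The support `W 0 ∪ G 0`. -/
def supp (σ : WComb) : Finset ℕ := σ.W 0 ∪ σ.G 0

/-- The ghost set `G 0 ∪ … ∪ G t`. -/
def ghost (σ : WComb) : Finset ℕ := (Finset.range (σ.t + 1)).biUnion σ.G

/-- The active set. -/
def active (σ : WComb) : Finset ℕ := σ.supp \ σ.ghost

/-- The dimension `|A(σ)| - 1`. -/
def dim (σ : WComb) : ℤ := (σ.active.card : ℤ) - 1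

/-- The increasing list `i₁ < … < i_q` of indices `1 ≤ i ≤ t` with `W i ≠ ∅`. -/
def nzList (σ : WComb) : List ℕ :=
  ((Finset.Icc 1 σ.t).filter (fun i => σ.W i ≠ ∅)).sort (· ≤ ·)

/-- `q`, the number of nonempty columns among `W 1, …, W t`. -/
def q (σ : WComb) : ℕ := σ.nzList.length

/-- `i_k`, with `i_0 = 0`. -/
def cIdx (σ : WComb) (k : ℕ) : ℕ := if k = 0 then 0 else σ.nzList.getD (k - 1) 0

/-- The canonical form `C(σ)`. -/
def canon (σ : WComb) : WComb where
  t := σ.q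
  W := fun k => if k ≤ σ.q then σ.W (σ.cIdx k) else ∅
  G := fun k =>
    if k = 0 then σ.G 0
    else if k ≤ σ.q then (Finset.Ioc (σ.cIdx (k - 1)) (σ.cIdx k)).biUnion σ.G else ∅
  W_beyond := fun i hi => if_neg (Nat.not_le.mpr hi)
  G_beyond := fun i hi => by
    have h0 : i ≠ 0 := by omega
    simp [h0, Nat.not_le.mpr hi]

/-- The truncation index `q = max {0 ≤ i ≤ t | W i ∪ G i ⊄ S ∪ G(σ)}` of stabilization. -/
def stQ (σ : WComb) (S : Finset ℕ) : ℕ :=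
  ((Finset.range (σ.t + 1)).filter (fun i => ¬ (σ.W i ∪ σ.G i ⊆ S ∪ σ.ghost))).sup id

/-- The sets `J i = (W i \ (W (i+1) ∪ … ∪ W q)) ∩ (S ∪ G(σ))`. -/
def Jset (σ : WComb) (S : Finset ℕ) (i : ℕ) : Finset ℕ :=
  (σ.W i \ (Finset.Ioc i (σ.stQ S)).biUnion σ.W) ∩ (S ∪ σ.ghost)

/-- The stabilization `st_S(σ)` in its table form. -/
def st (σ : WComb) (S : Finset ℕ) : WComb where
  t := σ.stQ S
  W := fun k => if k ≤ σ.stQ S then σ.W k \ σ.Jset S k else ∅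
  G := fun k => if k ≤ σ.stQ S then σ.G k ∪ σ.Jset S k else ∅
  W_beyond := fun i hi => if_neg (Nat.not_le.mpr hi)
  G_beyond := fun i hi => if_neg (Nat.not_le.mpr hi)

/-- The ghosting operation `Γ_S(σ) = C(st_S(σ))`. -/
def ghosting (σ : WComb) (S : Finset ℕ) : WComb := (σ.st S).canon

/-- The trace cardinality `M(p, σ) = |{0 ≤ i ≤ t | p ∈ W i ∪ G i}|`. -/
def Mcard (σ : WComb) (p : ℕ) : ℕ :=
  ((Finset.range (σ.t + 1)).filter (fun i => p ∈ σ.W i ∪ σ.G i)).card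

/-- The set of vertices of the simplex indexed by `σ`:
the witness structures `Γ_{A(σ) \ {a}}(σ)`, `a ∈ A(σ)`. -/
def vertexSet (σ : WComb) : Set WComb :=
  {v | ∃ a ∈ σ.active, v = σ.ghosting (σ.active \ {a})}

end WComb

/-- A round counter: a function `ℤ₊ → ℤ₊ ∪ {⊥}` with finite support. -/
structure RC where
  r : ℕ → Option ℕ
  fin : {i | r i ≠ none}.Finite

namespace RC

/-- The support set of a round counter. -/
noncomputable def supp (r : RC) : Finset ℕ := r.fin.toFinset

/-- The value of a round counter at a point of its support. -/
def val (r : RC) (i : ℕ) : ℕ := (r.r i).getD 0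

/-- The active set of a round counter. -/
noncomputable def act (r : RC) : Finset ℕ := r.supp.filter (fun i => 1 ≤ r.val i)

/-- The execution `r̄ ↓ S` of a set `S`. -/
noncomputable def down (r : RC) (S : Finset ℕ) : RC where
  r := fun i => if i ∈ S then (r.r i).map (· - 1) else r.r i
  fin := r.fin.subset (by
    intro i hi
    simp only [Set.mem_setOf_eq] at hi ⊢
    intro h
    apply hi
    simp [h])

/-- The deletion `r̄ \ A` of a set `A`. -/
def del (r : RC) (A : Finset ℕ) : RC where
  r := fun i => if i ∈ A then none else r.r i
  fin := r.fin.subset (by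
    intro i hi
    simp only [Set.mem_setOf_eq] at hi ⊢
    intro h
    apply hi
    simp [h])

/-- `r̄_{S,A} = (r̄ ↓ S) \ A`. -/
noncomputable def exec (r : RC) (S A : Finset ℕ) : RC := (r.down S).del A

end RC

/-- `σ` indexes a simplex of the immediate snapshot complex `P(r̄)`. -/
def IsSimplex (r : RC) (σ : WComb) : Prop :=
  σ.IsWitness ∧ σ.supp = r.supp ∧
  (∀ p ∈ σ.active, σ.Mcard p = r.val p + 1) ∧
  (∀ p ∈ σ.ghost, σ.Mcard p ≤ r.val p + 1)

/-- The stratum `Z_S` of `P(r̄)`: simplices with `S ⊆ G 1`. -/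
def Zset (r : RC) (S : Finset ℕ) : Set WComb :=
  {σ | IsSimplex r σ ∧ S ⊆ σ.G 1}

/-- The stratum `Y_{S,A}` of `P(r̄)`: simplices with `W 1 ∪ G 1 = S` and `A ⊆ G 1`. -/
def Yset (r : RC) (S A : Finset ℕ) : Set WComb :=
  {σ | IsSimplex r σ ∧ σ.W 1 ∪ σ.G 1 = S ∧ A ⊆ σ.G 1}

/-- The stratum `X_{S,A} = Y_{S,A} ∪ Z_S`. -/
def Xset (r : RC) (S A : Finset ℕ) : Set WComb := Yset r S A ∪ Zset r S

/-!
Call `σ'` a merge of `σ` along `f` if it keeps the columns `f 0 = 0 < f 1 < ⋯ < f t' = t`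
of `σ`, which include all nonempty `W`-columns, and moves the ghost sets of the dropped columns
forward into the next kept column. The canonical form is a merge along `k ↦ i_k`, and a merge
has the same canonical form as the original, because both list the same nonempty columns with
the same ghost sets in between. Stabilization commutes with merging: it only depends on the
`W`-columns, on the total ghost set (unchanged by merging), and on the last column whose
`W`-set is not absorbed by `S ∪ G(σ)`, which is a kept column.
-/

theorem Finset.Ioc_eq_biUnion_Ioc_pred {f : ℕ → ℕ} {n a b : ℕ}
    (hf : MonotoneOn f (Set.Iic n)) (hab : a ≤ b) (hbn : b ≤ n) :
    Ioc (f a) (f b) = (Ioc a b).biUnion fun l => Ioc (f (l - 1)) (f l) := by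
  induction b, hab using Nat.le_induction with
  | base => simp
  | succ b hab ih =>
    have hb : b ≤ n := by omega
    rw [← Finset.insert_Ioc_right_eq_Ioc_add_one hab, biUnion_insert, Nat.add_sub_cancel,
      ← ih hb, union_comm, Ioc_union_Ioc_eq_Ioc (hf (hab.trans hb) hb hab) (hf hb hbn b.le_succ)]

namespace WComb

@[ext]
theorem ext {σ τ : WComb} (ht : σ.t = τ.t) (hW : σ.W = τ.W) (hG : σ.G = τ.G) : σ = τ := by
  cases σ; cases τ; cases ht; cases hW; cases hG; rfl

theorem G_subset_ghost (σ : WComb) (i : ℕ) : σ.G i ⊆ σ.ghost := by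
  by_cases hi : i ≤ σ.t
  · exact subset_biUnion_of_mem σ.G (mem_range.mpr (Nat.lt_succ_of_le hi))
  · simp [σ.G_beyond i (by omega)]

theorem ghost_eq_G_zero_union (σ : WComb) :
    σ.ghost = σ.G 0 ∪ (Ioc 0 σ.t).biUnion σ.G := by
  have : range (σ.t + 1) = insert 0 (Ioc 0 σ.t) := by
    ext
    simp only [mem_range, mem_insert, mem_Ioc]
    omega
  rw [ghost, this, biUnion_insert]

theorem mem_nzList {σ : WComb} {i : ℕ} :
    i ∈ σ.nzList ↔ 1 ≤ i ∧ i ≤ σ.t ∧ σ.W i ≠ ∅ := by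
  simp [nzList, and_assoc]

theorem mem_zero_cons_nzList {σ : WComb} {i : ℕ} :
    i ∈ 0 :: σ.nzList ↔ i = 0 ∨ i ≤ σ.t ∧ σ.W i ≠ ∅ := by
  rw [List.mem_cons, mem_nzList]
  constructor
  · rintro (h | ⟨-, h⟩)
    exacts [.inl h, .inr h]
  · rintro (h | h)
    · exact .inl h
    · by_cases hi : i = 0
      · exact .inl hi
      · exact .inr ⟨by omega, h⟩

theorem sortedLT_zero_cons_nzList (σ : WComb) : (0 :: σ.nzList).SortedLT :=
  (List.pairwise_cons.mpr ⟨fun _ hi => (mem_nzList.mp hi).1, (sortedLT_sort _).pairwise⟩ :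
    (0 :: σ.nzList).Pairwise (· < ·)).sortedLT

theorem length_zero_cons_nzList (σ : WComb) : (0 :: σ.nzList).length = σ.q + 1 := rfl

theorem cIdx_eq_getD (σ : WComb) (k : ℕ) : σ.cIdx k = (0 :: σ.nzList).getD k 0 := by
  cases k <;> rfl

theorem strictMonoOn_cIdx (σ : WComb) : StrictMonoOn σ.cIdx (Set.Iic σ.q) := by
  intro a ha b hb hab
  have hlen := σ.length_zero_cons_nzList
  rw [cIdx_eq_getD, cIdx_eq_getD,
    List.getD_eq_getElem _ _ (by rw [hlen]; exact Nat.lt_succ_of_le ha),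
    List.getD_eq_getElem _ _ (by rw [hlen]; exact Nat.lt_succ_of_le hb)]
  exact σ.sortedLT_zero_cons_nzList.getElem_lt_getElem_of_lt hab

theorem cIdx_le_t (σ : WComb) (k : ℕ) : σ.cIdx k ≤ σ.t := by
  rw [cIdx_eq_getD]
  by_cases hk : k < (0 :: σ.nzList).length
  · rw [List.getD_eq_getElem _ _ hk]
    rcases mem_zero_cons_nzList.mp (List.getElem_mem hk) with h | h <;> simp [h]
  · rw [List.getD_eq_default _ _ (not_lt.mp hk)]
    exact Nat.zero_le _

theorem exists_cIdx_eq {σ : WComb} {i : ℕ} (hi : i ≤ σ.t) (hW : σ.W i ≠ ∅) :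
    ∃ k ≤ σ.q, σ.cIdx k = i := by
  obtain ⟨k, hk, rfl⟩ :=
    List.mem_iff_getElem.mp (mem_zero_cons_nzList.mpr (.inr ⟨hi, hW⟩))
  exact ⟨k, Nat.lt_succ_iff.mp hk, by rw [cIdx_eq_getD, List.getD_eq_getElem]⟩

theorem cIdx_q {σ : WComb} (hσ : 1 ≤ σ.t → σ.W σ.t ≠ ∅) : σ.cIdx σ.q = σ.t := by
  refine le_antisymm (σ.cIdx_le_t _) ?_
  rcases Nat.eq_zero_or_pos σ.t with ht | ht
  · exact ht ▸ Nat.zero_le _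
  obtain ⟨k, hk, hkt⟩ := exists_cIdx_eq le_rfl (hσ ht)
  exact hkt ▸ σ.strictMonoOn_cIdx.monotoneOn hk (le_refl σ.q) hk

theorem canon_W {σ : WComb} {k : ℕ} (hk : k ≤ σ.q) : σ.canon.W k = σ.W (σ.cIdx k) :=
  if_pos hk

theorem canon_G {σ : WComb} {k : ℕ} (hk₀ : k ≠ 0) (hk : k ≤ σ.q) :
    σ.canon.G k = (Ioc (σ.cIdx (k - 1)) (σ.cIdx k)).biUnion σ.G := by
  simp only [canon, if_neg hk₀, if_pos hk]

section Stabilization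

variable (σ : WComb) (S : Finset ℕ)

theorem W_union_G_subset_iff {i : ℕ} :
    σ.W i ∪ σ.G i ⊆ S ∪ σ.ghost ↔ σ.W i ⊆ S ∪ σ.ghost := by
  rw [union_subset_iff, and_iff_left ((σ.G_subset_ghost i).trans subset_union_right)]

theorem stQ_le_t : σ.stQ S ≤ σ.t :=
  Finset.sup_le fun _ hi => Nat.lt_succ_iff.mp (mem_range.mp (mem_filter.mp hi).1)

variable {σ S}

theorem le_stQ {i : ℕ} (hi : i ≤ σ.t) (h : ¬ σ.W i ⊆ S ∪ σ.ghost) : i ≤ σ.stQ S :=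
  le_sup (f := id) (mem_filter.mpr
    ⟨mem_range.mpr (Nat.lt_succ_of_le hi), (σ.W_union_G_subset_iff S).not.mpr h⟩)

theorem not_W_stQ_subset (h : σ.stQ S ≠ 0) : ¬ σ.W (σ.stQ S) ⊆ S ∪ σ.ghost := by
  rw [← σ.W_union_G_subset_iff S]
  unfold stQ at h ⊢
  set B := (range (σ.t + 1)).filter fun i => ¬σ.W i ∪ σ.G i ⊆ S ∪ σ.ghost
  obtain ⟨i, hi, hsup⟩ :=
    exists_mem_eq_sup B (nonempty_iff_ne_empty.mpr fun he => h (by rw [he]; rfl)) id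
  rw [hsup]
  exact (mem_filter.mp hi).2

theorem Jset_eq_empty {i : ℕ} (h : σ.W i = ∅) : σ.Jset S i = ∅ := by
  simp [Jset, h]

theorem st_W {k : ℕ} (hk : k ≤ σ.stQ S) : (σ.st S).W k = σ.W k \ σ.Jset S k :=
  if_pos hk

theorem st_G {k : ℕ} (hk : k ≤ σ.stQ S) : (σ.st S).G k = σ.G k ∪ σ.Jset S k :=
  if_pos hk

end Stabilization

structure IsMerge (f : ℕ → ℕ) (σ' σ : WComb) : Prop where
  map_zero : f 0 = 0
  strictMonoOn : StrictMonoOn f (Set.Iic σ'.t)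
  map_t : f σ'.t = σ.t
  W_eq : ∀ k ≤ σ'.t, σ'.W k = σ.W (f k)
  exists_of_W_ne : ∀ i ≤ σ.t, σ.W i ≠ ∅ → ∃ k ≤ σ'.t, f k = i
  G_zero : σ'.G 0 = σ.G 0
  G_eq : ∀ k, k ≠ 0 → k ≤ σ'.t → σ'.G k = (Ioc (f (k - 1)) (f k)).biUnion σ.G

theorem isMerge_canon {σ : WComb} (hσ : 1 ≤ σ.t → σ.W σ.t ≠ ∅) :
    IsMerge σ.cIdx σ.canon σ where
  map_zero := rfl
  strictMonoOn := σ.strictMonoOn_cIdx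
  map_t := cIdx_q hσ
  W_eq _ hk := canon_W hk
  exists_of_W_ne _ hi hW := exists_cIdx_eq hi hW
  G_zero := rfl
  G_eq _ hk₀ hk := canon_G hk₀ hk

namespace IsMerge

variable {f : ℕ → ℕ} {σ' σ : WComb} (hf : IsMerge f σ' σ)
include hf

theorem map_le_t {k : ℕ} (hk : k ≤ σ'.t) : f k ≤ σ.t :=
  hf.map_t ▸ hf.strictMonoOn.monotoneOn hk (Set.mem_Iic.mpr le_rfl) hk

theorem biUnion_Ioc_G {a b : ℕ} (hab : a ≤ b) (hb : b ≤ σ'.t) :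
    (Ioc a b).biUnion σ'.G = (Ioc (f a) (f b)).biUnion σ.G := by
  rw [Finset.Ioc_eq_biUnion_Ioc_pred hf.strictMonoOn.monotoneOn hab hb, biUnion_biUnion]
  exact biUnion_congr rfl fun l hl =>
    hf.G_eq l (by simp at hl; omega) ((mem_Ioc.mp hl).2.trans hb)

theorem ghost_eq : σ'.ghost = σ.ghost := by
  rw [ghost_eq_G_zero_union, ghost_eq_G_zero_union, hf.G_zero,
    hf.biUnion_Ioc_G (Nat.zero_le _) le_rfl, hf.map_zero, hf.map_t]

theorem biUnion_Ioc_map {F : ℕ → Finset ℕ} (hF : ∀ i, σ.W i = ∅ → F i = ∅)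
    {a b : ℕ} (ha : a ≤ σ'.t) (hb : b ≤ σ'.t) :
    (Ioc (f a) (f b)).biUnion F = (Ioc a b).biUnion (F ∘ f) := by
  ext x
  simp only [mem_biUnion, mem_Ioc, Function.comp_apply]
  constructor
  · rintro ⟨i, ⟨hai, hib⟩, hx⟩
    have hW : σ.W i ≠ ∅ := fun h => by simp [hF i h] at hx
    obtain ⟨k, hk, rfl⟩ := hf.exists_of_W_ne i (hib.trans (hf.map_le_t hb)) hW
    exact ⟨k, ⟨(hf.strictMonoOn.lt_iff_lt ha hk).mp hai,
      (hf.strictMonoOn.le_iff_le hk hb).mp hib⟩, hx⟩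
  · rintro ⟨l, ⟨hal, hlb⟩, hx⟩
    have hl : l ≤ σ'.t := hlb.trans hb
    exact ⟨f l, ⟨hf.strictMonoOn ha hl hal, hf.strictMonoOn.monotoneOn hl hb hlb⟩, hx⟩

theorem zero_cons_nzList : 0 :: σ.nzList = (0 :: σ'.nzList).map f := by
  have hle : ∀ k ∈ 0 :: σ'.nzList, k ≤ σ'.t := fun k hk => by
    rcases mem_zero_cons_nzList.mp hk with rfl | h
    exacts [Nat.zero_le _, h.1]
  have hsorted : ((0 :: σ'.nzList).map f).SortedLT :=
    (List.pairwise_map.mpr <| σ'.sortedLT_zero_cons_nzList.pairwise.imp_of_mem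
      fun ha hb hab => hf.strictMonoOn (hle _ ha) (hle _ hb) hab).sortedLT
  refine σ.sortedLT_zero_cons_nzList.eq_of_mem_iff hsorted fun i => ?_
  rw [List.mem_map, mem_zero_cons_nzList]
  constructor
  · rintro (rfl | ⟨hi, hW⟩)
    · exact ⟨0, List.mem_cons_self, hf.map_zero⟩
    · obtain ⟨k, hk, rfl⟩ := hf.exists_of_W_ne i hi hW
      exact ⟨k, mem_zero_cons_nzList.mpr (.inr ⟨hk, hf.W_eq k hk ▸ hW⟩), rfl⟩
  · rintro ⟨k, hk, rfl⟩
    rcases mem_zero_cons_nzList.mp hk with rfl | ⟨hk, hW⟩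
    · exact .inl hf.map_zero
    · exact .inr ⟨hf.map_le_t hk, hf.W_eq k hk ▸ hW⟩

theorem q_eq : σ'.q = σ.q := by
  simpa [q] using (congrArg List.length hf.zero_cons_nzList).symm

theorem cIdx_eq (k : ℕ) : σ.cIdx k = f (σ'.cIdx k) := by
  rw [cIdx_eq_getD, cIdx_eq_getD, hf.zero_cons_nzList, ← hf.map_zero, List.getD_map,
    hf.map_zero]

theorem canon_eq : σ'.canon = σ.canon := by
  ext1
  · exact hf.q_eq
  · funext k
    simp only [canon, hf.q_eq]
    split_ifs
    · rw [hf.W_eq _ (σ'.cIdx_le_t k), hf.cIdx_eq]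
    · rfl
  · funext k
    simp only [canon, hf.q_eq]
    split_ifs with hk₀ hk
    · exact hf.G_zero
    · have hk' : k ≤ σ'.q := hf.q_eq ▸ hk
      rw [hf.biUnion_Ioc_G (σ'.strictMonoOn_cIdx.monotoneOn (Set.mem_Iic.mpr (by omega)) hk'
        (by omega)) (σ'.cIdx_le_t k), hf.cIdx_eq, hf.cIdx_eq]
    · rfl

variable (S : Finset ℕ)

theorem map_stQ : f (σ'.stQ S) = σ.stQ S := by
  apply le_antisymm
  · rcases eq_or_ne (σ'.stQ S) 0 with h0 | h0
    · rw [h0, hf.map_zero]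
      exact Nat.zero_le _
    · apply le_stQ (hf.map_le_t (σ'.stQ_le_t S))
      rw [← hf.W_eq _ (σ'.stQ_le_t S), ← hf.ghost_eq]
      exact not_W_stQ_subset h0
  · rcases eq_or_ne (σ.stQ S) 0 with h0 | h0
    · exact h0 ▸ Nat.zero_le _
    · have hbad := not_W_stQ_subset h0
      obtain ⟨k, hk, hfk⟩ := hf.exists_of_W_ne _ (σ.stQ_le_t S)
        fun h => hbad (h ▸ empty_subset _)
      have hkQ : k ≤ σ'.stQ S := le_stQ hk (by rwa [hf.W_eq k hk, hfk, hf.ghost_eq])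
      exact hfk ▸ hf.strictMonoOn.monotoneOn hk (σ'.stQ_le_t S) hkQ

theorem map_le_stQ {k : ℕ} (hk : k ≤ σ'.stQ S) : f k ≤ σ.stQ S :=
  hf.map_stQ S ▸ hf.strictMonoOn.monotoneOn (hk.trans (σ'.stQ_le_t S)) (σ'.stQ_le_t S) hk

theorem Jset_eq {k : ℕ} (hk : k ≤ σ'.stQ S) : σ'.Jset S k = σ.Jset S (f k) := by
  have hQ := σ'.stQ_le_t S
  have hW : (Ioc k (σ'.stQ S)).biUnion σ'.W = (Ioc (f k) (σ.stQ S)).biUnion σ.W := by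
    rw [← hf.map_stQ S, hf.biUnion_Ioc_map (fun _ h => h) (hk.trans hQ) hQ]
    exact biUnion_congr rfl fun l hl => hf.W_eq l ((mem_Ioc.mp hl).2.trans hQ)
  rw [Jset, Jset, hW, hf.W_eq k (hk.trans hQ), hf.ghost_eq]

theorem st : IsMerge f (σ'.st S) (σ.st S) where
  map_zero := hf.map_zero
  strictMonoOn := hf.strictMonoOn.mono (Set.Iic_subset_Iic.mpr (σ'.stQ_le_t S))
  map_t := hf.map_stQ S
  W_eq k hk := by
    rw [st_W hk, st_W (hf.map_le_stQ S hk), hf.W_eq k (hk.trans (σ'.stQ_le_t S)),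
      hf.Jset_eq S hk]
  exists_of_W_ne i hi hW := by
    have hσW : σ.W i ≠ ∅ := fun h => hW (by rw [st_W hi, h, empty_sdiff])
    obtain ⟨k, hk, rfl⟩ := hf.exists_of_W_ne i (hi.trans (σ.stQ_le_t S)) hσW
    refine ⟨k, (hf.strictMonoOn.le_iff_le hk (σ'.stQ_le_t S)).mp ?_, rfl⟩
    rw [hf.map_stQ S]
    exact hi
  G_zero := by
    rw [st_G (Nat.zero_le _), st_G (Nat.zero_le _), hf.G_zero, hf.Jset_eq S (Nat.zero_le _),
      hf.map_zero]
  G_eq k hk₀ hk := by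
    have hkt : k ≤ σ'.t := hk.trans (σ'.stQ_le_t S)
    have hJ : (Ioc (f (k - 1)) (f k)).biUnion (σ.Jset S) = σ.Jset S (f k) := by
      obtain ⟨m, rfl⟩ := Nat.exists_eq_add_of_le' (Nat.pos_of_ne_zero hk₀)
      rw [hf.biUnion_Ioc_map (fun _ => Jset_eq_empty) (by omega) hkt, Nat.add_sub_cancel,
        Nat.Ioc_succ_singleton, singleton_biUnion, Function.comp_apply]
    rw [st_G hk, hf.G_eq k hk₀ hkt, hf.Jset_eq S hk, ← hJ, ← biUnion_union]
    exact biUnion_congr rfl fun i hi =>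
      (st_G ((mem_Ioc.mp hi).2.trans (hf.map_le_stQ S hk))).symm

end IsMerge

end WComb

theorem canon_st_canon_general (σ : WComb) (hσ : σ.IsStable) (S : Finset ℕ) :
    (σ.st S).canon = (σ.canon.st S).canon :=
  ((WComb.isMerge_canon hσ.2).st S).canon_eq.symm

/-- for a stable witness prestructure `σ` and `S ⊆ A(σ)`,
`C(st_S(σ)) = C(st_S(C(σ)))`. -/
theorem canon_st_canon (σ : WComb) (hσ : σ.IsStable) (S : Finset ℕ)
    (hS : S ⊆ σ.active) :
    (σ.st S).canon = (σ.canon.st S).canon :=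
  canon_st_canon_general σ hσ S
end

section
/- Let f(m_0,...,m_n) be defined by f(m_0,...,m_{n-1},0) = f(m_0,...,m_{n-1}), f() = 1, and for m_0,...,m_n ≥ 1, f(m_0,...,m_n) = Σ_{∅ ≠ S ⊆ [n]} f(m_0^S,...,m_n^S) where m_k^S = m_k − 1 if k ∈ S and m_k otherwise. Then f is symmetric: f(m_0,...,m_n) = f(m_{π(0)},...,m_{π(n)}) for every permutation π of {0,...,n}. -/
/-- Fuelled auxiliary recursion for the number of top-dimensional simplices of
the immediate snapshot complex `P(m₀, …, mₙ)`. -/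
def fAux : ℕ → List ℕ → ℕ
  | 0, _ => 1
  | _, [] => 1
  | fuel + 1, l =>
    if 0 ∈ l then fAux fuel (l.erase 0)
    else
      ∑ S ∈ (Finset.range l.length).powerset.erase ∅,
        fAux fuel (l.mapIdx fun i a => if i ∈ S then a - 1 else a)

/-- `f(m₀, …, mₙ)`, the number of top-dimensional simplices of `P(m₀, …, mₙ)`. -/
def fList (l : List ℕ) : ℕ := fAux (l.sum + l.length + 1) l

/-!
The fuel of `fAux` is irrelevant once it is at least `l.sum + l.length`, a quantity that strictly
drops along both branches of the recursion; hence `fList` satisfies the defining equations.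
Symmetry then follows by strong induction on `l.sum + l.length`: if `l'` is `l` with its positions
permuted by `σ`, then `S ↦ σ S` matches the nonempty position sets of `l'` with those of `l`, and
the decremented lists correspond up to the same permutation of positions, so the induction
hypothesis identifies the two recursive sums term by term.
-/

open Finset

/-- The paper's `m^S`. -/
def decrement (l : List ℕ) (S : Finset ℕ) : List ℕ :=
  l.mapIdx fun i a => if i ∈ S then a - 1 else a

@[simp]
lemma length_decrement (l : List ℕ) (S : Finset ℕ) : (decrement l S).length = l.length :=
  List.length_mapIdx

lemma sum_decrement (l : List ℕ) (S : Finset ℕ) :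
    (decrement l S).sum =
      ∑ i : Fin l.length, if (i : ℕ) ∈ S then l[(i : ℕ)] - 1 else l[(i : ℕ)] := by
  rw [decrement, List.mapIdx_eq_ofFn, List.sum_ofFn]
  rfl

lemma sum_decrement_le (l : List ℕ) (S : Finset ℕ) : (decrement l S).sum ≤ l.sum := by
  rw [sum_decrement, ← Fin.sum_univ_getElem l]
  exact sum_le_sum fun i _ => by split_ifs <;> omega

lemma sum_decrement_lt {l : List ℕ} {S : Finset ℕ} (h0 : 0 ∉ l)
    (hS : S ∈ (range l.length).powerset.erase ∅) :
    (decrement l S).sum < l.sum := by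
  obtain ⟨k, hk⟩ := nonempty_iff_ne_empty.2 (mem_erase.1 hS).1
  have hkl : k < l.length := mem_range.1 (mem_powerset.1 (mem_erase.1 hS).2 hk)
  have hpos : l[k] ≠ 0 := fun h => h0 (h ▸ List.getElem_mem hkl)
  rw [sum_decrement, ← Fin.sum_univ_getElem l]
  refine sum_lt_sum (fun i _ => by split_ifs <;> omega) ⟨⟨k, hkl⟩, mem_univ _, ?_⟩
  simp only [hk, if_true]
  omega

lemma sum_add_length_erase_zero_lt {l : List ℕ} (h0 : 0 ∈ l) :
    (l.erase 0).sum + (l.erase 0).length < l.sum + l.length := by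
  have p := List.perm_cons_erase h0
  rw [p.sum_eq, p.length_eq, List.sum_cons, List.length_cons]
  omega

lemma fAux_nil (F : ℕ) : fAux F [] = 1 := by cases F <;> rfl

lemma fAux_eq_fAux_of_le {F F' : ℕ} {l : List ℕ} (hF : l.sum + l.length ≤ F)
    (hF' : l.sum + l.length ≤ F') :
    fAux F l = fAux F' l := by
  induction F generalizing F' l with
  | zero => rw [List.eq_nil_of_length_eq_zero (l := l) (by omega), fAux_nil, fAux_nil]
  | succ F ih =>
    rcases eq_or_ne l [] with rfl | hne
    · rw [fAux_nil, fAux_nil]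
    have := List.length_pos_of_ne_nil hne
    obtain ⟨F', rfl⟩ := Nat.exists_eq_add_one_of_ne_zero (by omega : F' ≠ 0)
    rw [fAux.eq_3 _ _ hne, fAux.eq_3 _ _ hne]
    split_ifs with h0
    · have := sum_add_length_erase_zero_lt h0
      exact ih (by omega) (by omega)
    · refine sum_congr rfl fun S hS => ?_
      change fAux F (decrement l S) = fAux F' (decrement l S)
      have := sum_decrement_lt h0 hS
      have := length_decrement l S
      exact ih (by omega) (by omega)

lemma fList_eq_fAux {l : List ℕ} {F : ℕ} (h : l.sum + l.length ≤ F) : fList l = fAux F l :=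
  fAux_eq_fAux_of_le (by omega) h

lemma fList_of_zero_mem {l : List ℕ} (h0 : 0 ∈ l) : fList l = fList (l.erase 0) := by
  rw [fList, fAux.eq_3 _ _ (List.ne_nil_of_mem h0), if_pos h0, fList_eq_fAux]
  have := sum_add_length_erase_zero_lt h0
  omega

lemma fList_of_zero_not_mem {l : List ℕ} (hne : l ≠ []) (h0 : 0 ∉ l) :
    fList l = ∑ S ∈ (range l.length).powerset.erase ∅, fList (decrement l S) := by
  rw [fList, fAux.eq_3 _ _ hne, if_neg h0]
  refine sum_congr rfl fun S _ => (fList_eq_fAux (l := decrement l S) ?_).symm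
  have := sum_decrement_le l S
  have := length_decrement l S
  omega

lemma exists_perm_eq_comp_of_perm_ofFn {α : Type*} [LinearOrder α] {n : ℕ} {f g : Fin n → α}
    (h : (List.ofFn f).Perm (List.ofFn g)) : ∃ σ : Equiv.Perm (Fin n), g = f ∘ σ := by
  have hsort : f ∘ Tuple.sort f = g ∘ Tuple.sort g :=
    List.ofFn_injective <| List.Perm.eq_of_sortedLE
      (List.sortedLE_ofFn_iff.2 (Tuple.monotone_sort f))
      (List.sortedLE_ofFn_iff.2 (Tuple.monotone_sort g))
      (((Tuple.sort f).ofFn_comp_perm f).trans (h.trans ((Tuple.sort g).ofFn_comp_perm g).symm))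
  refine ⟨Tuple.sort f * (Tuple.sort g)⁻¹, funext fun i => ?_⟩
  simpa using (congrFun hsort ((Tuple.sort g)⁻¹ i)).symm

lemma sum_powerset_range_erase_empty {M : Type*} [AddCommMonoid M] (n : ℕ) (F : Finset ℕ → M) :
    ∑ S ∈ (range n).powerset.erase ∅, F S
      = ∑ T ∈ (univ : Finset (Finset (Fin n))).erase ∅, F (T.map Fin.valEmbedding) := by
  symm
  refine sum_nbij (·.map Fin.valEmbedding) ?_ ?_ ?_ fun _ _ => rfl
  · intro T hT
    simp_all [subset_iff]
  · exact (map_injective _).injOn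
  · intro S hS
    rw [mem_coe, mem_erase, mem_powerset, ← Nat.Iio_eq_range, ← Fin.map_valEmbedding_univ,
      subset_map_iff] at hS
    obtain ⟨hne, T, -, rfl⟩ := hS
    exact ⟨T, by simpa using hne, rfl⟩

lemma decrement_ofFn_map_valEmbedding {n : ℕ} (v : Fin n → ℕ) (T : Finset (Fin n)) :
    decrement (List.ofFn v) (T.map Fin.valEmbedding)
      = List.ofFn fun i => if i ∈ T then v i - 1 else v i := by
  apply List.ext_getElem (by simp)
  intro i h _
  obtain ⟨j, rfl⟩ : ∃ j : Fin n, (j : ℕ) = i := ⟨⟨i, by simpa using h⟩, rfl⟩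
  simp [decrement, Fin.val_inj]

lemma sum_decrement_ofFn_comp_perm {M : Type*} [AddCommMonoid M] {n : ℕ} (v : Fin n → ℕ)
    (σ : Equiv.Perm (Fin n)) (G : List ℕ → M)
    (hG : ∀ S ∈ (range n).powerset.erase ∅, ∀ l, l.Perm (decrement (List.ofFn v) S) →
      G l = G (decrement (List.ofFn v) S)) :
    ∑ S ∈ (range n).powerset.erase ∅, G (decrement (List.ofFn (v ∘ σ)) S)
      = ∑ S ∈ (range n).powerset.erase ∅, G (decrement (List.ofFn v) S) := by
  simp only [sum_powerset_range_erase_empty n, decrement_ofFn_map_valEmbedding]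
  refine sum_equiv σ.finsetCongr (by simp) fun T hT => ?_
  set w : Fin n → ℕ := fun i => if i ∈ σ.finsetCongr T then v i - 1 else v i
  have hw : (fun i => if i ∈ T then (v ∘ σ) i - 1 else (v ∘ σ) i) = w ∘ σ := by
    funext i
    simp [w]
  have hS : (σ.finsetCongr T).map Fin.valEmbedding ∈ (range n).powerset.erase ∅ := by
    simp_all [subset_iff]
  have h := hG _ hS (List.ofFn (w ∘ σ))
  rw [decrement_ofFn_map_valEmbedding] at h
  rw [hw, h (σ.ofFn_comp_perm w)]

theorem fList_perm {l l' : List ℕ} (p : l.Perm l') : fList l = fList l' := by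
  induction hN : l.sum + l.length using Nat.strong_induction_on generalizing l l' with
  | _ N ih =>
  by_cases h0 : 0 ∈ l
  · rw [fList_of_zero_mem h0, fList_of_zero_mem (p.subset h0)]
    exact ih _ (hN ▸ sum_add_length_erase_zero_lt h0) (p.erase 0) rfl
  rcases eq_or_ne l [] with rfl | hne
  · rw [p.nil_eq]
  obtain ⟨n, v, rfl⟩ : ∃ (n : ℕ) (v : Fin n → ℕ), l = List.ofFn v :=
    ⟨_, _, List.ofFn_getElem.symm⟩
  obtain ⟨m, w, rfl⟩ : ∃ (m : ℕ) (w : Fin m → ℕ), l' = List.ofFn w :=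
    ⟨_, _, List.ofFn_getElem.symm⟩
  obtain rfl : m = n := by simpa using p.length_eq.symm
  obtain ⟨σ, rfl⟩ := exists_perm_eq_comp_of_perm_ofFn p
  have hne' : List.ofFn (v ∘ σ) ≠ [] := by simpa using hne
  rw [fList_of_zero_not_mem hne h0, fList_of_zero_not_mem hne' fun h => h0 (p.mem_iff.2 h),
    List.length_ofFn, List.length_ofFn]
  refine (sum_decrement_ofFn_comp_perm v σ fList fun S hS l₁ hl₁ => ?_).symm
  have hlt := sum_decrement_lt h0 (by simpa using hS)
  refine (ih _ ?_ hl₁.symm rfl).symm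
  rw [length_decrement]
  omega

/-- `f` satisfies `f() = 1`, `f(m₀,…,m_{n-1},0) = f(m₀,…,m_{n-1})`,
and for `m₀,…,mₙ ≥ 1` the recursion
`f(m₀,…,mₙ) = Σ_{∅ ≠ S ⊆ [n]} f(m₀^S,…,mₙ^S)` where `m_k^S = m_k - 1` for
`k ∈ S` and `m_k` otherwise; moreover `f` is symmetric under every permutation
of its arguments. -/
theorem fList_recursion_and_symmetric :
    fList [] = 1 ∧
    (∀ l : List ℕ, fList (l ++ [0]) = fList l) ∧
    (∀ l : List ℕ, l ≠ [] → (∀ x ∈ l, 1 ≤ x) →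
      fList l = ∑ S ∈ (Finset.range l.length).powerset.erase ∅,
        fList (l.mapIdx fun i a => if i ∈ S then a - 1 else a)) ∧
    (∀ l l' : List ℕ, l.Perm l' → fList l = fList l') := by
  refine ⟨rfl, fun l => ?_, fun l hne hpos => ?_, fun _ _ => fList_perm⟩
  · calc fList (l ++ [0]) = fList (0 :: l) := fList_perm (List.perm_append_singleton 0 l)
      _ = fList l := by rw [fList_of_zero_mem List.mem_cons_self, List.erase_cons_head]
  · exact fList_of_zero_not_mem hne fun h0 => absurd (hpos 0 h0) (by decide)
end
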